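/- arXiv:2203.08076 — 3 statements merged into one kernel-verified Lean document; each statement's English description precedes it below -/
import Mathlib

section
/- Let d ≥ 1 and let Δ^{d-1} = {θ ∈ [0,∞)^d : θ_1 + ... + θ_d = 1} be the standard simplex. There exists a constant C_d > 0, depending only on d, such that for every probability (Radon) measure λ on Δ^{d-1} and every pair of parameters ε, δ ∈ (0,1), at least one of the following holds: (i) there exists a Borel set A ⊂ Δ^{d-1} with diam(A) ≤ ε and λ(A) > 1 − δ; or (ii) ∫_{Δ^{d-1}} ∫_{Δ^{d-1}} ‖θ − σ‖² λ(dθ) λ(dσ) ≥ C_d δ ε^{d+1}, where ‖·‖ is the Euclidean norm. -/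
/-! Take `C = 1/4`. Either some ball of radius `ε/2` carries mass `> 1 - δ`, or every point `θ`
sees mass `≥ δ` at distance `≥ ε/2`, so by Markov `∫ ‖θ - σ‖² dλ(σ) ≥ δ ε²/4` for every `θ`;
integrating in `θ` and using `ε^(d+1) ≤ ε²` gives the bound. -/

open MeasureTheory Metric

section NormSubSq

variable {E : Type*} [NormedAddCommGroup E] [MeasurableSpace E] {μ : Measure E}

lemma integrable_norm_sub_sq_prod [BorelSpace E] [SecondCountableTopology E] [IsFiniteMeasure μ]
    {s : Set E} (hs : Bornology.IsBounded s) (hμs : ∀ᵐ x ∂μ, x ∈ s) :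
    Integrable (fun p : E × E => ‖p.1 - p.2‖ ^ 2) (μ.prod μ) := by
  have hfst : ∀ᵐ p ∂μ.prod μ, p.1 ∈ s := Measure.quasiMeasurePreserving_fst.ae hμs
  have hsnd : ∀ᵐ p ∂μ.prod μ, p.2 ∈ s := Measure.quasiMeasurePreserving_snd.ae hμs
  refine Integrable.of_bound (by fun_prop) (diam s ^ 2) ?_
  filter_upwards [hfst, hsnd] with p h₁ h₂
  rw [norm_pow, norm_norm, ← dist_eq_norm]
  exact pow_le_pow_left₀ dist_nonneg (dist_le_diam_of_mem hs h₁ h₂) 2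

lemma sq_mul_measureReal_ball_compl_le_integral [IsFiniteMeasure μ] {θ : E} {r : ℝ}
    (hr : 0 ≤ r) (hint : Integrable (fun σ => ‖θ - σ‖ ^ 2) μ) :
    r ^ 2 * μ.real (ball θ r)ᶜ ≤ ∫ σ, ‖θ - σ‖ ^ 2 ∂μ := by
  have hsub : (ball θ r)ᶜ ⊆ {σ | r ^ 2 ≤ ‖θ - σ‖ ^ 2} := fun σ hσ => by
    rw [Set.mem_compl_iff, mem_ball, not_lt, dist_comm, dist_eq_norm] at hσ
    exact pow_le_pow_left₀ hr hσ 2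
  calc r ^ 2 * μ.real (ball θ r)ᶜ ≤ r ^ 2 * μ.real {σ | r ^ 2 ≤ ‖θ - σ‖ ^ 2} := by
        gcongr
        exact measure_ne_top _ _
    _ ≤ ∫ σ, ‖θ - σ‖ ^ 2 ∂μ :=
        mul_meas_ge_le_integral_of_nonneg (ae_of_all _ fun _ => by positivity) hint _

lemma mul_sq_le_integral_integral_norm_sub_sq [BorelSpace E] [SecondCountableTopology E]
    [IsProbabilityMeasure μ] {s : Set E} (hs : Bornology.IsBounded s) (hμs : ∀ᵐ x ∂μ, x ∈ s)
    {r δ : ℝ} (hr : 0 ≤ r) (hδ : ∀ θ, δ ≤ μ.real (ball θ r)ᶜ) :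
    δ * r ^ 2 ≤ ∫ θ, ∫ σ, ‖θ - σ‖ ^ 2 ∂μ ∂μ := by
  have hint := integrable_norm_sub_sq_prod hs hμs
  have hinner : ∀ᵐ θ ∂μ, δ * r ^ 2 ≤ ∫ σ, ‖θ - σ‖ ^ 2 ∂μ := by
    filter_upwards [hint.prod_right_ae] with θ hθ
    calc δ * r ^ 2 ≤ r ^ 2 * μ.real (ball θ r)ᶜ := by
          rw [mul_comm]; gcongr; exact hδ θ
      _ ≤ _ := sq_mul_measureReal_ball_compl_le_integral hr hθ
  calc δ * r ^ 2 = ∫ _, δ * r ^ 2 ∂μ := by simp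
    _ ≤ _ := integral_mono_ae (integrable_const _) hint.integral_prod_left hinner

end NormSubSq

lemma isCompact_euclidean_stdSimplex (d : ℕ) :
    IsCompact {θ : EuclideanSpace ℝ (Fin d) | (∀ i, 0 ≤ θ i) ∧ ∑ i, θ i = 1} :=
  (EuclideanSpace.equiv (Fin d) ℝ).toHomeomorph.isCompact_preimage.2
    (isCompact_stdSimplex ℝ (Fin d))

theorem stmt0 (d : ℕ) (hd : 1 ≤ d) :
    ∃ C : ℝ, 0 < C ∧
      ∀ (μ : Measure (EuclideanSpace ℝ (Fin d))), IsProbabilityMeasure μ →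
        μ {θ | (∀ i, 0 ≤ θ i) ∧ ∑ i, θ i = 1}ᶜ = 0 →
        ∀ ε δ : ℝ, ε ∈ Set.Ioo (0:ℝ) 1 → δ ∈ Set.Ioo (0:ℝ) 1 →
          (∃ A : Set (EuclideanSpace ℝ (Fin d)), MeasurableSet A ∧
              A ⊆ {θ | (∀ i, 0 ≤ θ i) ∧ ∑ i, θ i = 1} ∧
              Metric.diam A ≤ ε ∧ (1 - δ : ℝ) < (μ A).toReal) ∨
          C * δ * ε ^ (d + 1) ≤ ∫ θ, ∫ σ, ‖θ - σ‖ ^ 2 ∂μ ∂μ := by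
  refine ⟨1 / 4, by norm_num, fun μ _ hS ε δ ⟨hε0, hε1⟩ ⟨hδ0, _⟩ => ?_⟩
  have hK := isCompact_euclidean_stdSimplex d
  by_cases hball : ∃ θ, 1 - δ < μ.real (ball θ (ε / 2))
  · obtain ⟨θ, hθ⟩ := hball
    refine Or.inl ⟨ball θ (ε / 2) ∩ _, measurableSet_ball.inter hK.isClosed.measurableSet,
      Set.inter_subset_right, ?_, by rwa [measure_inter_conull hS]⟩
    calc diam (ball θ (ε / 2) ∩ _) ≤ diam (ball θ (ε / 2)) :=
          diam_mono Set.inter_subset_left isBounded_ball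
      _ ≤ 2 * (ε / 2) := diam_ball (by positivity)
      _ = ε := by ring
  · push Not at hball
    have hδ : ∀ θ, δ ≤ μ.real (ball θ (ε / 2))ᶜ := fun θ => by
      rw [probReal_compl_eq_one_sub measurableSet_ball]; linarith [hball θ]
    refine Or.inr ?_
    calc 1 / 4 * δ * ε ^ (d + 1) ≤ 1 / 4 * δ * ε ^ 2 := by
          have := pow_le_pow_of_le_one hε0.le hε1.le (by omega : 2 ≤ d + 1)
          gcongr
      _ = δ * (ε / 2) ^ 2 := by ring
      _ ≤ _ := mul_sq_le_integral_integral_norm_sub_sq hK.isBounded hS (by positivity) hδ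
end

section
/- Let γ, λ ∈ ℝ with −λ < 1, γ + λ < 1, and γ + 2λ arbitrary, and set p = max(λ, −γ−λ). Then there exist constants 0 < c₁ ≤ c₂ < ∞, depending only on γ and λ, such that for all a, b > 0: c₁ (a+b)^γ Φ_p(a/(a+b)) ≤ a^{γ+λ} b^{−λ} + b^{γ+λ} a^{−λ} ≤ c₂ (a+b)^γ Φ_p(a/(a+b)), where Φ_p(s) = s^{−p}(1−s)^{−p} for 0 < s < 1. Moreover γ + 2p = |γ + 2λ| ≥ 0. -/
theorem stmt10 (γ lam : ℝ) (h1 : -lam < 1) (h2 : γ + lam < 1) :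
    (0 ≤ γ + 2 * max lam (-γ - lam) ∧ γ + 2 * max lam (-γ - lam) = |γ + 2 * lam|) ∧
    ∃ c₁ c₂ : ℝ, 0 < c₁ ∧ c₁ ≤ c₂ ∧ ∀ a b : ℝ, 0 < a → 0 < b →
      c₁ * ((a + b) ^ γ * (a / (a + b)) ^ (-(max lam (-γ - lam)))
            * (b / (a + b)) ^ (-(max lam (-γ - lam))))
        ≤ a ^ (γ + lam) * b ^ (-lam) + b ^ (γ + lam) * a ^ (-lam) ∧
      a ^ (γ + lam) * b ^ (-lam) + b ^ (γ + lam) * a ^ (-lam)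
        ≤ c₂ * ((a + b) ^ γ * (a / (a + b)) ^ (-(max lam (-γ - lam)))
            * (b / (a + b)) ^ (-(max lam (-γ - lam)))) := by
  set p := max lam (-γ - lam) with hpdef
  have hpq : γ + 2 * p = |γ + 2 * lam| := by
    rcases le_total (-γ - lam) lam with h | h
    · rw [hpdef, max_eq_left h, abs_of_nonneg (by linarith)]
    · rw [hpdef, max_eq_right h, abs_of_nonpos (by linarith)]; ring
  have hq0 : 0 ≤ γ + 2 * p := hpq ▸ abs_nonneg _
  set q := γ + 2 * p with hqdef
  refine ⟨⟨hq0, hpq⟩, (2:ℝ) ^ (-q), 2, Real.rpow_pos_of_pos two_pos _, ?_, ?_⟩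
  · calc (2:ℝ) ^ (-q) ≤ (2:ℝ) ^ (0:ℝ) :=
          Real.rpow_le_rpow_of_exponent_le one_le_two (by linarith)
      _ ≤ 2 := by rw [Real.rpow_zero]; norm_num
  intro a b ha hb
  have hab : 0 < a + b := by linarith
  have hR : (a + b) ^ γ * (a / (a + b)) ^ (-p) * (b / (a + b)) ^ (-p)
      = (a + b) ^ q * a ^ (-p) * b ^ (-p) := by
    have e1 : (a / (a + b)) ^ (-p) = a ^ (-p) * (a + b) ^ p := by
      rw [Real.div_rpow ha.le hab.le, Real.rpow_neg hab.le, div_eq_mul_inv, inv_inv]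
    have e2 : (b / (a + b)) ^ (-p) = b ^ (-p) * (a + b) ^ p := by
      rw [Real.div_rpow hb.le hab.le, Real.rpow_neg hab.le, div_eq_mul_inv, inv_inv]
    rw [e1, e2, show q = γ + p + p by ring, Real.rpow_add hab, Real.rpow_add hab]
    ring
  have hK : a ^ (γ + lam) * b ^ (-lam) + b ^ (γ + lam) * a ^ (-lam)
      = a ^ (-p) * b ^ (-p) * (a ^ q + b ^ q) := by
    rcases le_total (-γ - lam) lam with h | h
    · have hpl : p = lam := max_eq_left h
      rw [hqdef, hpl, show γ + lam = (γ + 2 * lam) + (-lam) by ring,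
          Real.rpow_add ha, Real.rpow_add hb]
      ring
    · have hpl : p = -γ - lam := max_eq_right h
      have t1 : b ^ (-lam) = b ^ (γ + lam) * b ^ (γ + 2 * (-γ - lam)) := by
        rw [← Real.rpow_add hb]; congr 1; ring
      have t2 : a ^ (-lam) = a ^ (γ + lam) * a ^ (γ + 2 * (-γ - lam)) := by
        rw [← Real.rpow_add ha]; congr 1; ring
      rw [hqdef, hpl, show -(-γ - lam) = γ + lam from by ring, t1, t2]
      ring
  have hA : (0:ℝ) < a ^ (-p) * b ^ (-p) := by positivity
  have key1 : (a + b) ^ q ≤ 2 ^ q * (a ^ q + b ^ q) := by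
    have hmax : a + b ≤ 2 * max a b := by
      rcases le_total a b with h | h
      · rw [max_eq_right h]; linarith
      · rw [max_eq_left h]; linarith
    have hmp : (0:ℝ) < max a b := lt_max_of_lt_left ha
    calc (a + b) ^ q ≤ (2 * max a b) ^ q := Real.rpow_le_rpow hab.le hmax hq0
      _ = 2 ^ q * (max a b) ^ q := Real.mul_rpow (by norm_num) hmp.le
      _ ≤ 2 ^ q * (a ^ q + b ^ q) := by
          apply mul_le_mul_of_nonneg_left _ (by positivity)
          rcases le_total a b with h | h
          · rw [max_eq_right h]
            nlinarith [Real.rpow_nonneg ha.le q]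
          · rw [max_eq_left h]
            nlinarith [Real.rpow_nonneg hb.le q]
    
  have key2 : a ^ q + b ^ q ≤ 2 * (a + b) ^ q := by
    have h1' : a ^ q ≤ (a + b) ^ q := Real.rpow_le_rpow ha.le (by linarith) hq0
    have h2' : b ^ q ≤ (a + b) ^ q := Real.rpow_le_rpow hb.le (by linarith) hq0
    linarith
  have h2q : (2:ℝ) ^ (-q) * 2 ^ q = 1 := by
    rw [← Real.rpow_add two_pos]; norm_num
  have key1' : (2:ℝ) ^ (-q) * (a + b) ^ q ≤ a ^ q + b ^ q := by
    calc (2:ℝ) ^ (-q) * (a + b) ^ q ≤ 2 ^ (-q) * (2 ^ q * (a ^ q + b ^ q)) :=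
          mul_le_mul_of_nonneg_left key1 (by positivity)
      _ = a ^ q + b ^ q := by rw [← mul_assoc, h2q, one_mul]
  rw [hR, hK]
  constructor
  · calc (2:ℝ) ^ (-q) * ((a + b) ^ q * a ^ (-p) * b ^ (-p))
        = ((2:ℝ) ^ (-q) * (a + b) ^ q) * (a ^ (-p) * b ^ (-p)) := by ring
      _ ≤ (a ^ q + b ^ q) * (a ^ (-p) * b ^ (-p)) :=
          mul_le_mul_of_nonneg_right key1' hA.le
      _ = a ^ (-p) * b ^ (-p) * (a ^ q + b ^ q) := by ring
  · calc a ^ (-p) * b ^ (-p) * (a ^ q + b ^ q)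
        = (a ^ q + b ^ q) * (a ^ (-p) * b ^ (-p)) := by ring
      _ ≤ (2 * (a + b) ^ q) * (a ^ (-p) * b ^ (-p)) :=
          mul_le_mul_of_nonneg_right key2 hA.le
      _ = 2 * ((a + b) ^ q * a ^ (-p) * b ^ (-p)) := by ring
end

section
/- Let γ ∈ [0,1) and δ ∈ (0, (1−γ)/2] with ℓ := γ + 2δ ≤ 1. Define φ(A) = min(1, A)^{γ/2+δ} for A > 0 and ψ(x) = ∫₀^1 min(A, x)^ℓ (γ/2 + δ) A^{γ/2+δ−1} A^{γ/2−ℓ} dA for x > 0. Then there exists a constant C ≥ 1, depending only on γ and δ, such that C^{−1} min(1, x)^{γ+δ} ≤ ψ(x) ≤ C min(1, x)^{γ+δ} for all x > 0. -/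
open MeasureTheory Set Real Interval

/-! Since `A < 1`, `min A x = min A m` with `m = min 1 x`, and the integrand is
`(γ/2 + δ) · min A m ^ (p + δ) · A ^ (-δ - 1)` with `p = γ + δ`. Splitting at `A = m` gives
`ψ(x) = (γ/2 + δ) · (m^p / p + (m^p - m^(p+δ)) / δ)`, which lies between
`(γ/2 + δ)/p · m^p` and `(γ/2 + δ)(1/p + 1/δ) · m^p` because `0 ≤ m^(p+δ) ≤ m^p`. -/

theorem min_rpow_mul_rpow_of_le {p q A x : ℝ} (hA : 0 < A) (hAx : A ≤ x) :
    min A x ^ (p + q) * A ^ (-q - 1) = A ^ (p - 1) := by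
  rw [min_eq_left hAx, ← rpow_add hA]
  ring_nf

theorem integral_Ioo_min_rpow_mul_rpow {p q x : ℝ} (hp : 0 < p) (hq : q ≠ 0)
    (hx0 : 0 < x) (hx1 : x ≤ 1) :
    ∫ A in Ioo 0 1, min A x ^ (p + q) * A ^ (-q - 1)
      = x ^ p / p + (x ^ p - x ^ (p + q)) / q := by
  set f : ℝ → ℝ := fun A => min A x ^ (p + q) * A ^ (-q - 1)
  have h_left : EqOn (fun A => A ^ (p - 1)) f (Ι 0 x) := fun A hA => by
    rw [uIoc_of_le hx0.le] at hA
    exact (min_rpow_mul_rpow_of_le hA.1 hA.2).symm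
  have h_right : EqOn (fun A => x ^ (p + q) * A ^ (-q - 1)) f (uIcc x 1) := fun A hA => by
    rw [uIcc_of_le hx1] at hA
    simp only [f, min_eq_right hA.1]
  have h_zero_notMem : (0 : ℝ) ∉ uIcc x 1 := by
    rw [uIcc_of_le hx1]; exact fun h => hx0.not_ge h.1
  have hi_left : IntervalIntegrable f volume 0 x :=
    (intervalIntegral.intervalIntegrable_rpow' (by linarith)).congr h_left
  have hi_right : IntervalIntegrable f volume x 1 :=
    ((intervalIntegral.intervalIntegrable_rpow (Or.inr h_zero_notMem)).const_mul _).congr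
      (h_right.mono uIoc_subset_uIcc)
  have hv_left : ∫ A in 0..x, f A = x ^ p / p := by
    rw [← intervalIntegral.integral_congr_ae (.of_forall h_left),
      integral_rpow (Or.inl (by linarith)), sub_add_cancel, zero_rpow hp.ne', sub_zero]
  have hv_right : ∫ A in x..1, f A = (x ^ p - x ^ (p + q)) / q := by
    have hq' : -q - 1 ≠ -1 := by contrapose! hq; linarith
    have h_pow : x ^ (p + q) * x ^ (-q) = x ^ p := by rw [← rpow_add hx0, add_neg_cancel_right]
    rw [← intervalIntegral.integral_congr h_right, intervalIntegral.integral_const_mul,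
      integral_rpow (Or.inr ⟨hq', h_zero_notMem⟩), one_rpow, sub_add_cancel]
    field_simp
    linear_combination h_pow
  rw [← integral_Ioc_eq_integral_Ioo, ← intervalIntegral.integral_of_le zero_le_one,
    ← intervalIntegral.integral_add_adjacent_intervals hi_left hi_right, hv_left, hv_right]

theorem exists_one_le_inv_mul_le_and_le_mul {α : Type*} {s : Set α} {f g : α → ℝ} {a b : ℝ}
    (ha : 0 < a) (hg : ∀ x ∈ s, 0 ≤ g x) (hfg : ∀ x ∈ s, a * g x ≤ f x ∧ f x ≤ b * g x) :
    ∃ C : ℝ, 1 ≤ C ∧ ∀ x ∈ s, C⁻¹ * g x ≤ f x ∧ f x ≤ C * g x := by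
  refine ⟨max 1 (max a⁻¹ b), le_max_left _ _, fun x hx => ⟨?_, ?_⟩⟩
  · have hC : (max 1 (max a⁻¹ b))⁻¹ ≤ a :=
      inv_le_of_inv_le₀ ha (le_max_of_le_right (le_max_left _ _))
    exact (mul_le_mul_of_nonneg_right hC (hg x hx)).trans (hfg x hx).1
  · exact (hfg x hx).2.trans
      (mul_le_mul_of_nonneg_right (le_max_of_le_right (le_max_right _ _)) (hg x hx))

theorem psi_integrand_eq {γ δ A x : ℝ} (hA : A ∈ Ioo 0 1) :
    min A x ^ (γ + 2 * δ) * ((γ / 2 + δ) * A ^ (γ / 2 + δ - 1)) * A ^ (γ / 2 - (γ + 2 * δ))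
      = (γ / 2 + δ) * (min A (min 1 x) ^ (γ + δ + δ) * A ^ (-δ - 1)) := by
  rw [← min_assoc, min_eq_left hA.2.le, show γ + δ + δ = γ + 2 * δ by ring,
    show -δ - 1 = γ / 2 + δ - 1 + (γ / 2 - (γ + 2 * δ)) by ring, rpow_add hA.1]
  ring

theorem stmt14_general (γ δ : ℝ) (hγ : γ ∈ Set.Ico (0:ℝ) 1) (hδ : 0 < δ) :
    ∃ C : ℝ, 1 ≤ C ∧ ∀ x : ℝ, 0 < x →
      C⁻¹ * min 1 x ^ (γ + δ) ≤
        (∫ A in Set.Ioo (0:ℝ) 1,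
          min A x ^ (γ + 2 * δ) * ((γ / 2 + δ) * A ^ (γ / 2 + δ - 1))
            * A ^ (γ / 2 - (γ + 2 * δ))) ∧
      (∫ A in Set.Ioo (0:ℝ) 1,
          min A x ^ (γ + 2 * δ) * ((γ / 2 + δ) * A ^ (γ / 2 + δ - 1))
            * A ^ (γ / 2 - (γ + 2 * δ)))
        ≤ C * min 1 x ^ (γ + δ) := by
  have hc : 0 < γ / 2 + δ := by linarith [hγ.1]
  have hp : 0 < γ + δ := by linarith [hγ.1]
  refine exists_one_le_inv_mul_le_and_le_mul (s := Ioi 0)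
    (a := (γ / 2 + δ) / (γ + δ)) (b := (γ / 2 + δ) / (γ + δ) + (γ / 2 + δ) / δ)
    (by positivity) (fun x hx => rpow_nonneg (lt_min one_pos hx).le _) fun x hx => ?_
  set m := min 1 x
  have hm0 : 0 < m := lt_min one_pos hx
  have hm1 : m ≤ 1 := min_le_left _ _
  rw [setIntegral_congr_fun measurableSet_Ioo fun A hA => psi_integrand_eq hA,
    integral_const_mul, integral_Ioo_min_rpow_mul_rpow hp hδ.ne' hm0 hm1]
  have h_mono : m ^ (γ + δ + δ) ≤ m ^ (γ + δ) :=
    rpow_le_rpow_of_exponent_ge hm0 hm1 (by linarith)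
  have h_nonneg : 0 ≤ m ^ (γ + δ + δ) := by positivity
  have h_split : (γ / 2 + δ) * (m ^ (γ + δ) / (γ + δ) + (m ^ (γ + δ) - m ^ (γ + δ + δ)) / δ)
      = (γ / 2 + δ) / (γ + δ) * m ^ (γ + δ)
        + (γ / 2 + δ) / δ * (m ^ (γ + δ) - m ^ (γ + δ + δ)) := by ring
  rw [h_split, add_mul]
  constructor
  · exact le_add_of_nonneg_right (mul_nonneg (by positivity) (sub_nonneg.2 h_mono))
  · gcongr
    linarith

theorem stmt14 (γ δ : ℝ) (hγ : γ ∈ Set.Ico (0:ℝ) 1) (hδ : 0 < δ)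
    (hδ2 : δ ≤ (1 - γ) / 2) (hℓ : γ + 2 * δ ≤ 1) :
    ∃ C : ℝ, 1 ≤ C ∧ ∀ x : ℝ, 0 < x →
      C⁻¹ * min 1 x ^ (γ + δ) ≤
        (∫ A in Set.Ioo (0:ℝ) 1,
          min A x ^ (γ + 2 * δ) * ((γ / 2 + δ) * A ^ (γ / 2 + δ - 1))
            * A ^ (γ / 2 - (γ + 2 * δ))) ∧
      (∫ A in Set.Ioo (0:ℝ) 1,
          min A x ^ (γ + 2 * δ) * ((γ / 2 + δ) * A ^ (γ / 2 + δ - 1))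
            * A ^ (γ / 2 - (γ + 2 * δ)))
        ≤ C * min 1 x ^ (γ + δ) :=
  stmt14_general γ δ hγ hδ
end
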